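/- arXiv:1811.01447 — 2 statements merged into one kernel-verified Lean document; each statement's English description precedes it below -/
import Mathlib

section
/- Let α ≥ 0 and ϑ > 0. Let f, g : ℝ → ℝ be locally integrable, and let s, u : ℤ → ℝ be event sequences for f and g respectively at threshold ϑ (strictly increasing, unbounded below and above, and satisfying the LIF threshold property). Let E := range(s) ∪ range(u). Then for all real a ≤ b, either no element of E lies in [a,b] and |μ_f((a,b]) − μ_g((a,b])| ≤ 8ϑ, or there exist p, q ∈ E with a ≤ p ≤ q ≤ b such that |μ_f((a,b]) − μ_g((a,b])| ≤ |μ_f((p,q]) − μ_g((p,q])| + 8ϑ. (Pointwise form of the first quasi-isometry inequality for LIF: the full-interval discrepancy is controlled by the discrepancy over event-endpoint intervals up to 8ϑ.) -/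
/-!
Write `L_f(r, t)` for the leaky integral `μ_f((r,t])`. It satisfies the cocycle identity
`L_f(r, t) = e^{α(m-t)} L_f(r, m) + L_f(m, t)`, and since `α ≥ 0` the factor `e^{α(m-t)}`
is at most `1`, so `|L(a, b)| ≤ |L(a, p)| + |L(p, q)| + |L(q, b)|` for `a ≤ p ≤ q ≤ b`.
Inside one inter-event interval `[s_k, s_{k+1}]` the threshold property bounds `L_f(s_k, ·)`
by `ϑ`, hence by the cocycle identity `|L_f(r, t)| ≤ 2ϑ` for `s_k ≤ r ≤ t ≤ s_{k+1}`.
Taking for `p` the first and for `q` the last event of `s` or `u` in `[a, b]`, the pieces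
`(a, p]` and `(q, b]` lie inside one inter-event interval of each sequence, so they
contribute at most `2 · (2ϑ + 2ϑ) = 8ϑ` to the discrepancy `L_f - L_g`; if there is no event
in `[a, b]`, all of `(a, b]` is such a piece.
-/

open MeasureTheory intervalIntegral

/-- An event sequence for `f` at threshold `ϑ` with leak `α`: a strictly increasing
bi-infinite sequence of times, unbounded below and above, such that between
consecutive events the exponentially weighted integral of `f` stays within the
threshold `ϑ` (LIF threshold property). -/
def IsLIFEventSeq (α ϑ : ℝ) (f : ℝ → ℝ) (s : ℤ → ℝ) : Prop :=
  StrictMono s ∧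
    Filter.Tendsto s Filter.atBot Filter.atBot ∧
    Filter.Tendsto s Filter.atTop Filter.atTop ∧
    ∀ k : ℤ, ∀ t ∈ Set.Ioc (s k) (s (k + 1)),
      |∫ τ in (s k)..t, f τ * Real.exp (α * (τ - t))| ≤ ϑ

noncomputable def leakyIntegral (α : ℝ) (f : ℝ → ℝ) (r t : ℝ) : ℝ :=
  ∫ τ in r..t, f τ * Real.exp (α * (τ - t))

def BetweenConsecutiveEvents (s : ℤ → ℝ) (r t : ℝ) : Prop :=
  ∃ k, s k ≤ r ∧ t ≤ s (k + 1)

section LeakyIntegral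

variable {α : ℝ} {f g : ℝ → ℝ}

theorem MeasureTheory.LocallyIntegrable.intervalIntegrable_mul_exp
    (hf : LocallyIntegrable f volume) (α c r t : ℝ) :
    IntervalIntegrable (fun τ => f τ * Real.exp (α * (τ - c))) volume r t :=
  ((hf.integrableOn_isCompact isCompact_uIcc).mul_continuousOn
    (by fun_prop) isCompact_uIcc).intervalIntegrable

theorem leakyIntegral_eq_exp_mul_add (hf : LocallyIntegrable f volume) (α r m t : ℝ) :
    leakyIntegral α f r t =
      Real.exp (α * (m - t)) * leakyIntegral α f r m + leakyIntegral α f m t := by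
  have hrm : (∫ τ in r..m, f τ * Real.exp (α * (τ - t))) =
      Real.exp (α * (m - t)) * ∫ τ in r..m, f τ * Real.exp (α * (τ - m)) := by
    rw [← intervalIntegral.integral_const_mul]
    refine integral_congr fun τ _ => ?_
    rw [show α * (τ - t) = α * (m - t) + α * (τ - m) by ring, Real.exp_add]
    ring
  simp only [leakyIntegral]
  rw [← integral_add_adjacent_intervals (hf.intervalIntegrable_mul_exp α t r m)
    (hf.intervalIntegrable_mul_exp α t m t), hrm]

theorem leakyIntegral_sub (hf : LocallyIntegrable f volume) (hg : LocallyIntegrable g volume)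
    (α r t : ℝ) :
    leakyIntegral α (f - g) r t = leakyIntegral α f r t - leakyIntegral α g r t := by
  simp only [leakyIntegral, Pi.sub_apply, sub_mul]
  exact integral_sub (hf.intervalIntegrable_mul_exp α t r t)
    (hg.intervalIntegrable_mul_exp α t r t)

theorem abs_exp_mul_le_abs (hα : 0 ≤ α) {m t : ℝ} (hmt : m ≤ t) (x : ℝ) :
    |Real.exp (α * (m - t)) * x| ≤ |x| := by
  rw [abs_mul, Real.abs_exp]
  refine mul_le_of_le_one_left (abs_nonneg x) (Real.exp_le_one_iff.mpr ?_)
  exact mul_nonpos_of_nonneg_of_nonpos hα (sub_nonpos.mpr hmt)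

theorem abs_leakyIntegral_le_add (hα : 0 ≤ α) (hf : LocallyIntegrable f volume) (r : ℝ)
    {m t : ℝ} (hmt : m ≤ t) :
    |leakyIntegral α f r t| ≤ |leakyIntegral α f r m| + |leakyIntegral α f m t| := by
  rw [leakyIntegral_eq_exp_mul_add hf α r m t]
  exact (abs_add_le _ _).trans (add_le_add_left (abs_exp_mul_le_abs hα hmt _) _)

end LeakyIntegral

namespace IsLIFEventSeq

variable {α ϑ : ℝ} {f g : ℝ → ℝ} {s u : ℤ → ℝ}

theorem threshold_nonneg (hs : IsLIFEventSeq α ϑ f s) : 0 ≤ ϑ :=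
  (abs_nonneg _).trans (hs.2.2.2 0 (s (0 + 1)) ⟨hs.1 (lt_add_one 0), le_rfl⟩)

theorem abs_leakyIntegral_event_le (hs : IsLIFEventSeq α ϑ f s) {k : ℤ} {t : ℝ}
    (hkt : s k ≤ t) (htk : t ≤ s (k + 1)) : |leakyIntegral α f (s k) t| ≤ ϑ := by
  rcases hkt.eq_or_lt with rfl | hkt
  · simpa [leakyIntegral] using hs.threshold_nonneg
  · exact hs.2.2.2 k t ⟨hkt, htk⟩

theorem abs_leakyIntegral_le_two_mul (hα : 0 ≤ α) (hf : LocallyIntegrable f volume)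
    (hs : IsLIFEventSeq α ϑ f s) {r t : ℝ} (hrt : r ≤ t)
    (hst : BetweenConsecutiveEvents s r t) :
    |leakyIntegral α f r t| ≤ 2 * ϑ := by
  obtain ⟨k, hkr, htk⟩ := hst
  have hsplit : leakyIntegral α f r t =
      leakyIntegral α f (s k) t - Real.exp (α * (r - t)) * leakyIntegral α f (s k) r := by
    rw [leakyIntegral_eq_exp_mul_add hf α (s k) r t]; ring
  rw [hsplit]
  calc _ ≤ |leakyIntegral α f (s k) t| +
          |Real.exp (α * (r - t)) * leakyIntegral α f (s k) r| := abs_sub _ _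
    _ ≤ ϑ + ϑ := add_le_add (hs.abs_leakyIntegral_event_le (hkr.trans hrt) htk)
        ((abs_exp_mul_le_abs hα hrt _).trans (hs.abs_leakyIntegral_event_le hkr (hrt.trans htk)))
    _ = 2 * ϑ := by ring

theorem abs_sub_leakyIntegral_le_four_mul (hα : 0 ≤ α) (hf : LocallyIntegrable f volume)
    (hg : LocallyIntegrable g volume) (hs : IsLIFEventSeq α ϑ f s) (hu : IsLIFEventSeq α ϑ g u)
    {r t : ℝ} (hrt : r ≤ t) (hsrt : BetweenConsecutiveEvents s r t)
    (hurt : BetweenConsecutiveEvents u r t) :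
    |leakyIntegral α f r t - leakyIntegral α g r t| ≤ 4 * ϑ := by
  have hfrt := hs.abs_leakyIntegral_le_two_mul hα hf hrt hsrt
  have hgrt := hu.abs_leakyIntegral_le_two_mul hα hg hrt hurt
  linarith [abs_sub (leakyIntegral α f r t) (leakyIntegral α g r t)]

theorem abs_sub_leakyIntegral_le (hα : 0 ≤ α) (hf : LocallyIntegrable f volume)
    (hg : LocallyIntegrable g volume) (hs : IsLIFEventSeq α ϑ f s) (hu : IsLIFEventSeq α ϑ g u)
    {a p q b : ℝ} (hap : a ≤ p) (hpq : p ≤ q) (hqb : q ≤ b)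
    (hsap : BetweenConsecutiveEvents s a p) (huap : BetweenConsecutiveEvents u a p)
    (hsqb : BetweenConsecutiveEvents s q b) (huqb : BetweenConsecutiveEvents u q b) :
    |leakyIntegral α f a b - leakyIntegral α g a b| ≤
      |leakyIntegral α f p q - leakyIntegral α g p q| + 8 * ϑ := by
  have head := abs_sub_leakyIntegral_le_four_mul hα hf hg hs hu hap hsap huap
  have tail := abs_sub_leakyIntegral_le_four_mul hα hf hg hs hu hqb hsqb huqb
  simp only [← leakyIntegral_sub hf hg] at head tail ⊢
  have hfg := hf.sub hg
  have hsplit_q := abs_leakyIntegral_le_add hα hfg a hqb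
  have hsplit_p := abs_leakyIntegral_le_add hα hfg a hpq
  linarith

end IsLIFEventSeq

section EventTimes

variable {s u : ℤ → ℝ}

theorem exists_apply_lt_le_apply_succ (hbot : Filter.Tendsto s Filter.atBot Filter.atBot)
    (htop : Filter.Tendsto s Filter.atTop Filter.atTop) (x : ℝ) :
    ∃ k, s k < x ∧ x ≤ s (k + 1) := by
  obtain ⟨N, hN⟩ := Filter.eventually_atTop.mp (htop.eventually (Filter.eventually_ge_atTop x))
  obtain ⟨z, hz⟩ := (hbot.eventually (Filter.eventually_lt_atBot x)).exists
  obtain ⟨k, hk, hmax⟩ := Int.exists_greatest_of_bdd (P := fun k => s k < x)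
    ⟨N, fun k hk => not_lt.mp fun hNk => (hN k hNk.le).not_gt hk⟩ ⟨z, hz⟩
  exact ⟨k, hk, not_lt.mp fun h => (hmax _ h).not_gt (lt_add_one k)⟩

theorem exists_apply_le_lt_apply_succ (hbot : Filter.Tendsto s Filter.atBot Filter.atBot)
    (htop : Filter.Tendsto s Filter.atTop Filter.atTop) (x : ℝ) :
    ∃ k, s k ≤ x ∧ x < s (k + 1) := by
  obtain ⟨N, hN⟩ := Filter.eventually_atTop.mp (htop.eventually (Filter.eventually_gt_atTop x))
  obtain ⟨z, hz⟩ := (hbot.eventually (Filter.eventually_le_atBot x)).exists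
  obtain ⟨k, hk, hmax⟩ := Int.exists_greatest_of_bdd (P := fun k => s k ≤ x)
    ⟨N, fun k hk => not_lt.mp fun hNk => (hN k hNk.le).not_ge hk⟩ ⟨z, hz⟩
  exact ⟨k, hk, not_le.mp fun h => (hmax _ h).not_gt (lt_add_one k)⟩

theorem StrictMono.apply_mem_Icc_of_mem_Icc (hs : StrictMono s) {a b : ℝ} {j m k : ℤ}
    (hj : s j < a) (hm : b < s (m + 1)) (hk : s k ∈ Set.Icc a b) :
    s k ∈ Set.Icc (s (j + 1)) (s m) :=
  ⟨hs.monotone (Int.add_one_le_of_lt (hs.lt_iff_lt.mp (hj.trans_le hk.1))),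
    hs.monotone (Int.le_of_lt_add_one (hs.lt_iff_lt.mp (hk.2.trans_lt hm)))⟩

theorem eventTimes_inter_Icc_cases (hs : StrictMono s)
    (hsbot : Filter.Tendsto s Filter.atBot Filter.atBot)
    (hstop : Filter.Tendsto s Filter.atTop Filter.atTop) (hu : StrictMono u)
    (hubot : Filter.Tendsto u Filter.atBot Filter.atBot)
    (hutop : Filter.Tendsto u Filter.atTop Filter.atTop) (a b : ℝ) :
    ((Set.range s ∪ Set.range u) ∩ Set.Icc a b = ∅ ∧
        BetweenConsecutiveEvents s a b ∧ BetweenConsecutiveEvents u a b) ∨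
      ∃ p ∈ Set.range s ∪ Set.range u, ∃ q ∈ Set.range s ∪ Set.range u,
        a ≤ p ∧ p ≤ q ∧ q ≤ b ∧
          BetweenConsecutiveEvents s a p ∧ BetweenConsecutiveEvents u a p ∧
          BetweenConsecutiveEvents s q b ∧ BetweenConsecutiveEvents u q b := by
  obtain ⟨j, hj, haj⟩ := exists_apply_lt_le_apply_succ hsbot hstop a
  obtain ⟨j', hj', haj'⟩ := exists_apply_lt_le_apply_succ hubot hutop a
  obtain ⟨m, hmb, hbm⟩ := exists_apply_le_lt_apply_succ hsbot hstop b
  obtain ⟨m', hmb', hbm'⟩ := exists_apply_le_lt_apply_succ hubot hutop b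
  rcases Set.eq_empty_or_nonempty ((Set.range s ∪ Set.range u) ∩ Set.Icc a b) with hE | hE
  · have hbj : b < s (j + 1) := not_le.mp fun h => hE.subset ⟨.inl ⟨_, rfl⟩, haj, h⟩
    have hbj' : b < u (j' + 1) := not_le.mp fun h => hE.subset ⟨.inr ⟨_, rfl⟩, haj', h⟩
    exact .inl ⟨hE, ⟨j, hj.le, hbj.le⟩, ⟨j', hj'.le, hbj'.le⟩⟩
  obtain ⟨x, hxE, hx⟩ := hE
  have hpx : min (s (j + 1)) (u (j' + 1)) ≤ x ∧ x ≤ max (s m) (u m') := by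
    rcases hxE with ⟨k, rfl⟩ | ⟨k, rfl⟩
    · have hk := hs.apply_mem_Icc_of_mem_Icc hj hbm hx
      exact ⟨(min_le_left _ _).trans hk.1, hk.2.trans (le_max_left _ _)⟩
    · have hk := hu.apply_mem_Icc_of_mem_Icc hj' hbm' hx
      exact ⟨(min_le_right _ _).trans hk.1, hk.2.trans (le_max_right _ _)⟩
  refine .inr ⟨_, ?_, _, ?_, le_min haj haj', hpx.1.trans hpx.2, max_le hmb hmb',
    ⟨j, hj.le, min_le_left _ _⟩, ⟨j', hj'.le, min_le_right _ _⟩,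
    ⟨m, le_max_left _ _, hbm.le⟩, ⟨m', le_max_right _ _, hbm'.le⟩⟩
  · rcases min_choice (s (j + 1)) (u (j' + 1)) with h | h <;> rw [h]
    exacts [.inl ⟨_, rfl⟩, .inr ⟨_, rfl⟩]
  · rcases max_choice (s m) (u m') with h | h <;> rw [h]
    exacts [.inl ⟨_, rfl⟩, .inr ⟨_, rfl⟩]

end EventTimes

theorem lif_quasi_isometry_pointwise_general (α ϑ : ℝ) (hα : 0 ≤ α)
    (f g : ℝ → ℝ) (hf : LocallyIntegrable f (volume : Measure ℝ))
    (hg : LocallyIntegrable g (volume : Measure ℝ))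
    (s u : ℤ → ℝ) (hs : IsLIFEventSeq α ϑ f s) (hu : IsLIFEventSeq α ϑ g u) :
    ∀ a b : ℝ, a ≤ b →
      ((Set.range s ∪ Set.range u) ∩ Set.Icc a b = ∅ ∧
          |(∫ τ in a..b, f τ * Real.exp (α * (τ - b))) -
              ∫ τ in a..b, g τ * Real.exp (α * (τ - b))| ≤ 8 * ϑ) ∨
        (∃ p ∈ Set.range s ∪ Set.range u, ∃ q ∈ Set.range s ∪ Set.range u,
          a ≤ p ∧ p ≤ q ∧ q ≤ b ∧
            |(∫ τ in a..b, f τ * Real.exp (α * (τ - b))) -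
                ∫ τ in a..b, g τ * Real.exp (α * (τ - b))| ≤
              |(∫ τ in p..q, f τ * Real.exp (α * (τ - q))) -
                  ∫ τ in p..q, g τ * Real.exp (α * (τ - q))| + 8 * ϑ) := by
  intro a b hab
  rcases eventTimes_inter_Icc_cases hs.1 hs.2.1 hs.2.2.1 hu.1 hu.2.1 hu.2.2.1 a b with
    ⟨hE, hsab, huab⟩ | ⟨p, hp, q, hq, hap, hpq, hqb, hsap, huap, hsqb, huqb⟩
  · have hdiff := hs.abs_sub_leakyIntegral_le_four_mul hα hf hg hu hab hsab huab
    exact .inl ⟨hE, hdiff.trans (by linarith [hs.threshold_nonneg])⟩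
  · exact .inr ⟨p, hp, q, hq, hap, hpq, hqb,
      hs.abs_sub_leakyIntegral_le hα hf hg hu hap hpq hqb hsap huap hsqb huqb⟩

/-- **Pointwise form of the first quasi-isometry inequality for LIF.**
For any interval `(a,b]`, either no event time lies in `[a,b]` and the discrepancy
`|μ_f((a,b]) − μ_g((a,b])|` is at most `8ϑ`, or there are event times
`a ≤ p ≤ q ≤ b` such that the full-interval discrepancy is controlled by the
discrepancy over `(p,q]` up to the additive constant `8ϑ`. -/
theorem lif_quasi_isometry_pointwise (α ϑ : ℝ) (hα : 0 ≤ α) (hϑ : 0 < ϑ)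
    (f g : ℝ → ℝ) (hf : LocallyIntegrable f (volume : Measure ℝ))
    (hg : LocallyIntegrable g (volume : Measure ℝ))
    (s u : ℤ → ℝ) (hs : IsLIFEventSeq α ϑ f s) (hu : IsLIFEventSeq α ϑ g u) :
    ∀ a b : ℝ, a ≤ b →
      ((Set.range s ∪ Set.range u) ∩ Set.Icc a b = ∅ ∧
          |(∫ τ in a..b, f τ * Real.exp (α * (τ - b))) -
              ∫ τ in a..b, g τ * Real.exp (α * (τ - b))| ≤ 8 * ϑ) ∨
        (∃ p ∈ Set.range s ∪ Set.range u, ∃ q ∈ Set.range s ∪ Set.range u,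
          a ≤ p ∧ p ≤ q ∧ q ≤ b ∧
            |(∫ τ in a..b, f τ * Real.exp (α * (τ - b))) -
                ∫ τ in a..b, g τ * Real.exp (α * (τ - b))| ≤
              |(∫ τ in p..q, f τ * Real.exp (α * (τ - q))) -
                  ∫ τ in p..q, g τ * Real.exp (α * (τ - q))| + 8 * ϑ) :=
  lif_quasi_isometry_pointwise_general α ϑ hα f g hf hg s u hs hu
end

section
/- Let α ≥ 0 and ϑ > 0. Let f, g : ℝ → ℝ be locally integrable with event sequences s, u : ℤ → ℝ at threshold ϑ (strictly increasing, unbounded below and above, satisfying the LIF threshold property), and let E := range(s) ∪ range(u). Define D_𝔉 := sup_{a ≤ b} |μ_f((a,b]) − μ_g((a,b])| and D_ℰ := sup_{p ≤ q, p,q ∈ E} |μ_f((p,q]) − μ_g((p,q])|. If D_𝔉 is finite, then D_𝔉 − 8ϑ ≤ D_ℰ ≤ D_𝔉. (Theorem 1: leaky integrate-and-fire sampling is a quasi-isometry with multiplicative constant A = 1 and additive constant B = 8ϑ between the signal space with discrepancy metric d_𝔉 and the event space with discrepancy metric d_ℰ.) -/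
open MeasureTheory intervalIntegral

noncomputable def wInt (α : ℝ) (f : ℝ → ℝ) (a b : ℝ) : ℝ :=
  ∫ τ in a..b, f τ * Real.exp (α * (τ - b))

lemma wInt_integrable {f : ℝ → ℝ} (hf : LocallyIntegrable f (volume : Measure ℝ))
    (α c a b : ℝ) :
    IntervalIntegrable (fun τ => f τ * Real.exp (α * (τ - c))) volume a b := by
  have h1 : IntervalIntegrable f volume a b :=
    (hf.integrableOn_isCompact isCompact_uIcc).intervalIntegrable
  exact h1.mul_continuousOn (Continuous.continuousOn (by continuity))

lemma wInt_cocycle {f : ℝ → ℝ} (hf : LocallyIntegrable f (volume : Measure ℝ))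
    (α a c b : ℝ) :
    wInt α f a b = Real.exp (α * (c - b)) * wInt α f a c + wInt α f c b := by
  have key : ∀ τ : ℝ, f τ * Real.exp (α * (τ - b)) =
      Real.exp (α * (c - b)) * (f τ * Real.exp (α * (τ - c))) := by
    intro τ
    have h : α * (τ - b) = α * (c - b) + α * (τ - c) := by ring
    rw [h, Real.exp_add]; ring
  have h2 : (∫ τ in a..c, f τ * Real.exp (α * (τ - b))) =
      Real.exp (α * (c - b)) * wInt α f a c := by
    rw [wInt, ← intervalIntegral.integral_const_mul]
    exact intervalIntegral.integral_congr (fun τ _ => key τ)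
  have h3 := intervalIntegral.integral_add_adjacent_intervals
    (wInt_integrable hf α b a c) (wInt_integrable hf α b c b)
  rw [wInt, ← h3, h2]; rfl

lemma pred_exists {α ϑ : ℝ} {f : ℝ → ℝ} {s : ℤ → ℝ} (hs : IsLIFEventSeq α ϑ f s)
    (t : ℝ) : ∃ k : ℤ, s k < t ∧ t ≤ s (k + 1) := by
  obtain ⟨mono, hbot, htop, _⟩ := hs
  obtain ⟨n, hn⟩ := (htop.eventually (Filter.eventually_ge_atTop t)).exists
  obtain ⟨m, hm⟩ := (hbot.eventually (Filter.eventually_lt_atBot t)).exists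
  haveI : DecidablePred fun k : ℤ => t ≤ s k := Classical.decPred _
  obtain ⟨k₀, hk₀, hleast⟩ := Int.exists_least_of_bdd (P := fun k : ℤ => t ≤ s k)
    ⟨m, fun z hz => by
      by_contra h
      push_neg at h
      exact absurd (mono (by omega : z < m)) (by linarith [hz, hm] : ¬ s z < s m)⟩
    ⟨n, hn⟩
  refine ⟨k₀ - 1, ?_, by simpa using hk₀⟩
  by_contra h
  push_neg at h
  have := hleast _ h
  omega

lemma near_event {α ϑ : ℝ} {f : ℝ → ℝ} {s : ℤ → ℝ} (hα : 0 ≤ α) (hϑ : 0 < ϑ)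
    (hf : LocallyIntegrable f (volume : Measure ℝ)) (hs : IsLIFEventSeq α ϑ f s)
    (t : ℝ) :
    ∃ p ∈ Set.range s, p ≤ t ∧ ∀ w, p ≤ w → w ≤ t → |wInt α f w t| ≤ 2 * ϑ := by
  obtain ⟨k, hk1, hk2⟩ := pred_exists hs t
  have thr := hs.2.2.2
  have claim1 : ∀ w, s k ≤ w → w ≤ s (k + 1) → |wInt α f (s k) w| ≤ ϑ := by
    intro w h1 h2
    rcases eq_or_lt_of_le h1 with h | h
    · simp [wInt, ← h, intervalIntegral.integral_same, le_of_lt hϑ]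
    · exact thr k w ⟨h, h2⟩
  refine ⟨s k, ⟨k, rfl⟩, le_of_lt hk1, fun w hw1 hw2 => ?_⟩
  have hco := wInt_cocycle hf α (s k) w t
  have h1 : |wInt α f (s k) t| ≤ ϑ := claim1 t (le_of_lt hk1) hk2
  have h2 : |wInt α f (s k) w| ≤ ϑ := claim1 w hw1 (le_trans hw2 hk2)
  have hexp : Real.exp (α * (w - t)) ≤ 1 := by
    rw [Real.exp_le_one_iff]
    exact mul_nonpos_of_nonneg_of_nonpos hα (by linarith)
  have : wInt α f w t = wInt α f (s k) t - Real.exp (α * (w - t)) * wInt α f (s k) w := by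
    linarith [hco]
  rw [this]
  calc |wInt α f (s k) t - Real.exp (α * (w - t)) * wInt α f (s k) w|
      ≤ |wInt α f (s k) t| + |Real.exp (α * (w - t)) * wInt α f (s k) w| := abs_sub _ _
    _ ≤ ϑ + 1 * ϑ := by
        refine add_le_add h1 ?_
        rw [abs_mul, abs_of_pos (Real.exp_pos _)]
        exact mul_le_mul hexp h2 (abs_nonneg _) zero_le_one
    _ = 2 * ϑ := by ring

lemma near_event2 {α ϑ : ℝ} {f g : ℝ → ℝ} {s u : ℤ → ℝ} (hα : 0 ≤ α) (hϑ : 0 < ϑ)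
    (hf : LocallyIntegrable f (volume : Measure ℝ))
    (hg : LocallyIntegrable g (volume : Measure ℝ))
    (hs : IsLIFEventSeq α ϑ f s) (hu : IsLIFEventSeq α ϑ g u) (t : ℝ) :
    ∃ w ∈ Set.range s ∪ Set.range u, w ≤ t ∧
      |wInt α f w t - wInt α g w t| ≤ 4 * ϑ := by
  obtain ⟨p, hp, hpt, hpf⟩ := near_event hα hϑ hf hs t
  obtain ⟨p', hp', hpt', hpg⟩ := near_event hα hϑ hg hu t
  refine ⟨max p p', ?_, max_le hpt hpt', ?_⟩
  · rcases max_choice p p' with h | h <;> rw [h]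
    · exact Or.inl hp
    · exact Or.inr hp'
  · have h1 := hpf (max p p') (le_max_left _ _) (max_le hpt hpt')
    have h2 := hpg (max p p') (le_max_right _ _) (max_le hpt hpt')
    calc |wInt α f (max p p') t - wInt α g (max p p') t|
        ≤ |wInt α f (max p p') t| + |wInt α g (max p p') t| := abs_sub _ _
      _ ≤ 2 * ϑ + 2 * ϑ := add_le_add h1 h2
      _ = 4 * ϑ := by ring

/-- **Theorem 1: LIF sampling is a quasi-isometry** with multiplicative constant
`A = 1` and additive constant `B = 8ϑ` between the signal space with the
discrepancy metric `d_𝔉` and the event space with the discrepancy metric `d_ℰ`: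
writing `D_𝔉 = sup_{a ≤ b} |μ_f((a,b]) − μ_g((a,b])|` and
`D_ℰ = sup_{p ≤ q, p,q events} |μ_f((p,q]) − μ_g((p,q])|`, if `D_𝔉` is finite then
`D_𝔉 − 8ϑ ≤ D_ℰ ≤ D_𝔉`. -/
theorem lif_quasi_isometry (α ϑ : ℝ) (hα : 0 ≤ α) (hϑ : 0 < ϑ)
    (f g : ℝ → ℝ) (hf : LocallyIntegrable f (volume : Measure ℝ))
    (hg : LocallyIntegrable g (volume : Measure ℝ))
    (s u : ℤ → ℝ) (hs : IsLIFEventSeq α ϑ f s) (hu : IsLIFEventSeq α ϑ g u)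
    (E : Set ℝ) (hE : E = Set.range s ∪ Set.range u)
    (DF DE : ℝ)
    (hDF : DF = sSup {d : ℝ | ∃ a b : ℝ, a ≤ b ∧
      d = |(∫ τ in a..b, f τ * Real.exp (α * (τ - b))) -
            ∫ τ in a..b, g τ * Real.exp (α * (τ - b))|})
    (hDE : DE = sSup {d : ℝ | ∃ p ∈ E, ∃ q ∈ E, p ≤ q ∧
      d = |(∫ τ in p..q, f τ * Real.exp (α * (τ - q))) -
            ∫ τ in p..q, g τ * Real.exp (α * (τ - q))|})
    (hfin : BddAbove {d : ℝ | ∃ a b : ℝ, a ≤ b ∧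
      d = |(∫ τ in a..b, f τ * Real.exp (α * (τ - b))) -
            ∫ τ in a..b, g τ * Real.exp (α * (τ - b))|}) :
    DF - 8 * ϑ ≤ DE ∧ DE ≤ DF := by
  set S : Set ℝ := {d : ℝ | ∃ a b : ℝ, a ≤ b ∧
      d = |wInt α f a b - wInt α g a b|} with hS
  set T : Set ℝ := {d : ℝ | ∃ p ∈ E, ∃ q ∈ E, p ≤ q ∧
      d = |wInt α f p q - wInt α g p q|} with hT
  have hDF' : DF = sSup S := hDF
  have hDE' : DE = sSup T := hDE
  have hfin' : BddAbove S := hfin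
  have hTS : T ⊆ S := by
    rintro d ⟨p, _, q, _, hpq, rfl⟩
    exact ⟨p, q, hpq, rfl⟩
  have hTbdd : BddAbove T := hfin'.mono hTS
  have hTne : T.Nonempty := by
    refine ⟨|wInt α f (s 0) (s 0) - wInt α g (s 0) (s 0)|,
      s 0, ?_, s 0, ?_, le_refl _, rfl⟩ <;>
    · rw [hE]; exact Or.inl ⟨0, rfl⟩
  have hSne : S.Nonempty := ⟨_, 0, 0, le_refl 0, rfl⟩
  constructor
  · -- DF - 8ϑ ≤ DE
    rw [hDF', hDE']
    have main : ∀ d ∈ S, d ≤ sSup T + 8 * ϑ := by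
      rintro d ⟨a, b, hab, rfl⟩
      obtain ⟨q, hqE, hqb, hq4⟩ := near_event2 hα hϑ hf hg hs hu b
      obtain ⟨p, hpE, hpa, hp4⟩ := near_event2 hα hϑ hf hg hs hu a
      rw [← hE] at hqE hpE
      have hexp_ab : Real.exp (α * (a - b)) ≤ 1 := by
        rw [Real.exp_le_one_iff]
        exact mul_nonpos_of_nonneg_of_nonpos hα (by linarith)
      rcases le_total p q with hpq | hqp
      · -- p ≤ q ≤ b, p ≤ a
        have hmem : |wInt α f p q - wInt α g p q| ∈ T := ⟨p, hpE, q, hqE, hpq, rfl⟩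
        have hle : |wInt α f p q - wInt α g p q| ≤ sSup T := le_csSup hTbdd hmem
        have hexp_qb : Real.exp (α * (q - b)) ≤ 1 := by
          rw [Real.exp_le_one_iff]
          exact mul_nonpos_of_nonneg_of_nonpos hα (by linarith)
        have e1 := wInt_cocycle hf α p a b
        have e2 := wInt_cocycle hf α p q b
        have e3 := wInt_cocycle hg α p a b
        have e4 := wInt_cocycle hg α p q b
        have key : wInt α f a b - wInt α g a b =
            Real.exp (α * (q - b)) * (wInt α f p q - wInt α g p q) +
            (wInt α f q b - wInt α g q b) -
            Real.exp (α * (a - b)) * (wInt α f p a - wInt α g p a) := by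
          linear_combination e2 - e1 - e4 + e3
        rw [key]
        have b1 : |Real.exp (α * (q - b)) * (wInt α f p q - wInt α g p q)| ≤ sSup T := by
          rw [abs_mul, abs_of_pos (Real.exp_pos _)]
          calc Real.exp (α * (q - b)) * |wInt α f p q - wInt α g p q|
              ≤ 1 * |wInt α f p q - wInt α g p q| :=
                mul_le_mul_of_nonneg_right hexp_qb (abs_nonneg _)
            _ = _ := one_mul _
            _ ≤ sSup T := hle
        have b3 : |Real.exp (α * (a - b)) * (wInt α f p a - wInt α g p a)| ≤ 4 * ϑ := by
          rw [abs_mul, abs_of_pos (Real.exp_pos _)]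
          calc Real.exp (α * (a - b)) * |wInt α f p a - wInt α g p a|
              ≤ 1 * (4 * ϑ) :=
                mul_le_mul hexp_ab hp4 (abs_nonneg _) zero_le_one
            _ = 4 * ϑ := one_mul _
        calc |Real.exp (α * (q - b)) * (wInt α f p q - wInt α g p q) +
            (wInt α f q b - wInt α g q b) -
            Real.exp (α * (a - b)) * (wInt α f p a - wInt α g p a)|
            ≤ |Real.exp (α * (q - b)) * (wInt α f p q - wInt α g p q) +
              (wInt α f q b - wInt α g q b)| +
              |Real.exp (α * (a - b)) * (wInt α f p a - wInt α g p a)| := abs_sub _ _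
          _ ≤ |Real.exp (α * (q - b)) * (wInt α f p q - wInt α g p q)| +
              |wInt α f q b - wInt α g q b| +
              |Real.exp (α * (a - b)) * (wInt α f p a - wInt α g p a)| := by
                have := abs_add_le (Real.exp (α * (q - b)) * (wInt α f p q - wInt α g p q))
                  (wInt α f q b - wInt α g q b)
                linarith
          _ ≤ sSup T + 4 * ϑ + 4 * ϑ := by
                refine add_le_add (add_le_add b1 hq4) b3
          _ = sSup T + 8 * ϑ := by ring
      · -- q ≤ p ≤ a ≤ b
        have hmem : |wInt α f q p - wInt α g q p| ∈ T := ⟨q, hqE, p, hpE, hqp, rfl⟩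
        have hle : |wInt α f q p - wInt α g q p| ≤ sSup T := le_csSup hTbdd hmem
        have hexp_pa : Real.exp (α * (p - a)) ≤ 1 := by
          rw [Real.exp_le_one_iff]
          exact mul_nonpos_of_nonneg_of_nonpos hα (by linarith)
        have e1 := wInt_cocycle hf α q a b
        have e2 := wInt_cocycle hf α q p a
        have e3 := wInt_cocycle hg α q a b
        have e4 := wInt_cocycle hg α q p a
        have key : wInt α f a b - wInt α g a b =
            (wInt α f q b - wInt α g q b) -
            Real.exp (α * (a - b)) * Real.exp (α * (p - a)) *
              (wInt α f q p - wInt α g q p) -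
            Real.exp (α * (a - b)) * (wInt α f p a - wInt α g p a) := by
          linear_combination e3 - e1 - Real.exp (α * (a - b)) * e2 +
            Real.exp (α * (a - b)) * e4
        rw [key]
        have b2 : |Real.exp (α * (a - b)) * Real.exp (α * (p - a)) *
            (wInt α f q p - wInt α g q p)| ≤ sSup T := by
          rw [abs_mul, abs_of_pos (by positivity : (0:ℝ) <
            Real.exp (α * (a - b)) * Real.exp (α * (p - a)))]
          have hee : Real.exp (α * (a - b)) * Real.exp (α * (p - a)) ≤ 1 := by
            calc Real.exp (α * (a - b)) * Real.exp (α * (p - a)) ≤ 1 * 1 :=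
                  mul_le_mul hexp_ab hexp_pa (le_of_lt (Real.exp_pos _)) zero_le_one
              _ = 1 := one_mul 1
          calc Real.exp (α * (a - b)) * Real.exp (α * (p - a)) *
              |wInt α f q p - wInt α g q p|
              ≤ 1 * |wInt α f q p - wInt α g q p| :=
                mul_le_mul_of_nonneg_right hee (abs_nonneg _)
            _ = _ := one_mul _
            _ ≤ sSup T := hle
        have b3 : |Real.exp (α * (a - b)) * (wInt α f p a - wInt α g p a)| ≤ 4 * ϑ := by
          rw [abs_mul, abs_of_pos (Real.exp_pos _)]
          calc Real.exp (α * (a - b)) * |wInt α f p a - wInt α g p a|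
              ≤ 1 * (4 * ϑ) := mul_le_mul hexp_ab hp4 (abs_nonneg _) zero_le_one
            _ = 4 * ϑ := one_mul _
        calc |(wInt α f q b - wInt α g q b) -
            Real.exp (α * (a - b)) * Real.exp (α * (p - a)) *
              (wInt α f q p - wInt α g q p) -
            Real.exp (α * (a - b)) * (wInt α f p a - wInt α g p a)|
            ≤ |(wInt α f q b - wInt α g q b) -
              Real.exp (α * (a - b)) * Real.exp (α * (p - a)) *
                (wInt α f q p - wInt α g q p)| +
              |Real.exp (α * (a - b)) * (wInt α f p a - wInt α g p a)| := abs_sub _ _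
          _ ≤ |wInt α f q b - wInt α g q b| +
              |Real.exp (α * (a - b)) * Real.exp (α * (p - a)) *
                (wInt α f q p - wInt α g q p)| +
              |Real.exp (α * (a - b)) * (wInt α f p a - wInt α g p a)| := by
                have := abs_sub (wInt α f q b - wInt α g q b)
                  (Real.exp (α * (a - b)) * Real.exp (α * (p - a)) *
                    (wInt α f q p - wInt α g q p))
                linarith
          _ ≤ 4 * ϑ + sSup T + 4 * ϑ := add_le_add (add_le_add hq4 b2) b3
          _ = sSup T + 8 * ϑ := by ring
    linarith [csSup_le hSne main]
  · rw [hDF', hDE']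
    exact csSup_le_csSup hfin' hTne hTS
end
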